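/- For all z, w ∈ (−1,1) with z ≠ w, the following identities hold: (1/2)·log( ((z−w)² + (√(1−z²)+√(1−w²))²) / ((z−w)² + (√(1−z²)−√(1−w²))²) ) = log( (√(1−z²)·√(1−w²) + 1 − z·w) / |z−w| ) = artanh( √(1−z²)·√(1−w²) / (1 − z·w) ). -/
import Mathlib


/-- Inverse hyperbolic tangent. -/
noncomputable def artanh (x : ℝ) : ℝ := (1/2) * Real.log ((1 + x) / (1 - x))

private lemma half_log_sq (t : ℝ) :
    (1/2 : ℝ) * Real.log (t ^ 2) = Real.log t := by
  rw [Real.log_pow]; push_cast; ring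

/-- For all `z, w ∈ (−1,1)` with `z ≠ w`, the phase shift of two interacting dark
solitons can be written in three equivalent forms. -/
theorem dark_soliton_phase_shift_identities (z w : ℝ)
    (hz : z ∈ Set.Ioo (-1 : ℝ) 1) (hw : w ∈ Set.Ioo (-1 : ℝ) 1) (hzw : z ≠ w) :
    (1/2) * Real.log (((z - w) ^ 2 + (Real.sqrt (1 - z ^ 2) + Real.sqrt (1 - w ^ 2)) ^ 2)
        / ((z - w) ^ 2 + (Real.sqrt (1 - z ^ 2) - Real.sqrt (1 - w ^ 2)) ^ 2))
      = Real.log ((Real.sqrt (1 - z ^ 2) * Real.sqrt (1 - w ^ 2) + 1 - z * w) / |z - w|)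
    ∧ Real.log ((Real.sqrt (1 - z ^ 2) * Real.sqrt (1 - w ^ 2) + 1 - z * w) / |z - w|)
      = artanh (Real.sqrt (1 - z ^ 2) * Real.sqrt (1 - w ^ 2) / (1 - z * w)) := by
  obtain ⟨hz1, hz2⟩ := hz
  obtain ⟨hw1, hw2⟩ := hw
  set a := Real.sqrt (1 - z ^ 2) with ha
  set b := Real.sqrt (1 - w ^ 2) with hb
  have hz2' : (0:ℝ) < 1 - z ^ 2 := by nlinarith
  have hw2' : (0:ℝ) < 1 - w ^ 2 := by nlinarith
  have hA : 0 < a := Real.sqrt_pos.mpr hz2'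
  have hB : 0 < b := Real.sqrt_pos.mpr hw2'
  have ha2 : a ^ 2 = 1 - z ^ 2 := Real.sq_sqrt hz2'.le
  have hb2 : b ^ 2 = 1 - w ^ 2 := Real.sq_sqrt hw2'.le
  have hd : z - w ≠ 0 := sub_ne_zero.mpr hzw
  have hd2 : 0 < (z - w) ^ 2 := by positivity
  have habs : 0 < |z - w| := abs_pos.mpr hd
  have h1 : 0 < 1 - z * w := by nlinarith
  have hP : 0 < a * b + 1 - z * w := by nlinarith [mul_pos hA hB]
  have hPQ : (a * b + 1 - z * w) * (1 - z * w - a * b) = (z - w) ^ 2 := by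
    nlinarith [ha2, hb2]
  have hQ : 0 < 1 - z * w - a * b := by nlinarith
  have hPa : 0 < (a * b + 1 - z * w) / |z - w| := div_pos hP habs
  have hN : (z - w) ^ 2 + (a + b) ^ 2 = 2 * (a * b + 1 - z * w) := by
    linear_combination ha2 + hb2
  have hD : (z - w) ^ 2 + (a - b) ^ 2 = 2 * (1 - z * w - a * b) := by
    linear_combination ha2 + hb2
  have e1 : ((z - w) ^ 2 + (a + b) ^ 2) / ((z - w) ^ 2 + (a - b) ^ 2)
      = ((a * b + 1 - z * w) / |z - w|) ^ 2 := by
    rw [hN, hD, div_pow, sq_abs, div_eq_div_iff (by linarith) hd2.ne']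
    linear_combination (-2 * (a * b + 1 - z * w)) * hPQ
  have hx : 1 - a * b / (1 - z * w) = (1 - z * w - a * b) / (1 - z * w) := by
    field_simp
  have hy : 1 + a * b / (1 - z * w) = (a * b + 1 - z * w) / (1 - z * w) := by
    field_simp; ring
  have e2 : (1 + a * b / (1 - z * w)) / (1 - a * b / (1 - z * w))
      = ((a * b + 1 - z * w) / |z - w|) ^ 2 := by
    rw [hx, hy, div_pow, sq_abs, div_eq_div_iff (by positivity) hd2.ne', ← hPQ]
    ring
  constructor
  · rw [e1, half_log_sq _]
  · rw [artanh, e2, half_log_sq _]
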